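/- Let m ≥ 1 be an integer, let μ > -m/2 and η > -m/2 be real numbers, and let 0 ≤ γ < 1. Then ∫_{ℝᵐ} (zᵀz)^η · ₁F₁(-μ; m/2; -γ·zᵀz/2) · ψ_{0,I}(z) dz = 2^η · (Γ(η+m/2)/Γ(m/2)) · ₂F₁(η+m/2, -μ; m/2; -γ), where I is the m×m identity matrix. -/

import Mathlib

/-!
Expand `₁F₁` in its power series in `zᵀz`. The `n`-th term integrates against the standard
Gaussian to a multiple of the moment `∫ (zᵀz)^(η+n) ψ = 2^(η+n) Γ(η+n+m/2)/Γ(m/2)`, computed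
in polar coordinates, and `Γ(η+n+m/2) = Γ(η+m/2) (η+m/2)ₙ` turns it into the `n`-th term of
`2^η Γ(η+m/2)/Γ(m/2) · ₂F₁(η+m/2, -μ; m/2; -γ)`. The integrals of the absolute values of the
terms are the absolute values of these `₂F₁` terms, summable for `|γ| < 1` by the ratio test,
so sum and integral may be interchanged.
-/

open Real MeasureTheory

/-- Pochhammer symbol `(a)ₙ = ∏_{i=1}^n (a+i-1)`. -/
noncomputable def poch (a : ℝ) (n : ℕ) : ℝ := ∏ i ∈ Finset.range n, (a + i)

/-- Confluent hypergeometric series `₁F₁(b;c;z) = ∑ (b)ₙ/(c)ₙ · zⁿ/n!`. -/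
noncomputable def oneF1 (b c z : ℝ) : ℝ :=
  ∑' n : ℕ, poch b n / poch c n * z ^ n / (n.factorial : ℝ)

/-- Gauss hypergeometric series `₂F₁(a,b;c;z) = ∑ (a)ₙ(b)ₙ/(c)ₙ · zⁿ/n!`. -/
noncomputable def twoF1 (a b c z : ℝ) : ℝ :=
  ∑' n : ℕ, poch a n * poch b n / poch c n * z ^ n / (n.factorial : ℝ)

/-- Multivariate normal density `ψ_{κ,λI}` on `ℝᵐ`. -/
noncomputable def gaussDensityIso (m : ℕ) (κ : Fin m → ℝ) (l : ℝ) (z : Fin m → ℝ) : ℝ :=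
  (2 * π) ^ (-(m : ℝ) / 2) * (l ^ m) ^ (-(1 : ℝ) / 2) *
    Real.exp (-(∑ i, (z i - κ i) ^ 2) / (2 * l))

open Set Filter Topology

lemma poch_succ (a : ℝ) (n : ℕ) : poch a (n + 1) = poch a n * (a + n) :=
  Finset.prod_range_succ _ _

lemma Gamma_add_natCast_eq_mul_poch {a : ℝ} (ha : 0 < a) (n : ℕ) :
    Gamma (a + n) = Gamma a * poch a n := by
  induction n with
  | zero => simp [poch]
  | succ n ih =>
    rw [Nat.cast_succ, ← add_assoc, Gamma_add_one (by positivity), ih, poch_succ]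
    ring

noncomputable def oneF1Term (b c z : ℝ) (n : ℕ) : ℝ :=
  poch b n / poch c n * z ^ n / (n.factorial : ℝ)

noncomputable def twoF1Term (a b c z : ℝ) (n : ℕ) : ℝ :=
  poch a n * poch b n / poch c n * z ^ n / (n.factorial : ℝ)

lemma twoF1_eq_tsum_twoF1Term (a b c z : ℝ) : twoF1 a b c z = ∑' n, twoF1Term a b c z n := rfl

lemma twoF1Term_succ (a b c z : ℝ) (n : ℕ) :
    twoF1Term a b c z (n + 1) =
      twoF1Term a b c z n * ((a + n) * (b + n) / ((c + n) * (n + 1)) * z) := by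
  simp only [twoF1Term, poch_succ, pow_succ, Nat.factorial_succ, Nat.cast_mul, Nat.cast_succ]
  simp only [div_eq_mul_inv, mul_inv]
  ring

lemma tendsto_twoF1Term_ratio (a b c z : ℝ) :
    Tendsto (fun n : ℕ => (a + n) * (b + n) / ((c + n) * (n + 1)) * z) atTop (𝓝 z) := by
  have h (x y : ℝ) : Tendsto (fun n : ℕ => (x + n) / (y + n)) atTop (𝓝 1) := by
    simpa using tendsto_add_mul_div_add_mul_atTop_nhds x y (1 : ℝ) one_ne_zero
  have key := ((h a c).mul (h b 1)).mul_const z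
  rw [one_mul, one_mul] at key
  refine key.congr fun n => ?_
  rw [mul_div_mul_comm, add_comm (n : ℝ) 1]

lemma summable_abs_twoF1Term (a b c : ℝ) {z : ℝ} (hz : |z| < 1) :
    Summable fun n => |twoF1Term a b c z n| := by
  obtain ⟨r, hzr, hr1⟩ := exists_between hz
  refine (summable_of_ratio_norm_eventually_le hr1 ?_).abs
  filter_upwards [(tendsto_twoF1Term_ratio a b c z).abs.eventually_lt_const hzr] with n hn
  rw [twoF1Term_succ, norm_mul, Real.norm_eq_abs, Real.norm_eq_abs, mul_comm]
  exact mul_le_mul_of_nonneg_right hn.le (abs_nonneg _)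

lemma integral_Ioi_rpow_mul_exp_neg_half_mul_sq {q : ℝ} (hq : -1 < q) :
    ∫ y in Ioi (0 : ℝ), y ^ q * exp (-(1 / 2) * y ^ (2 : ℝ)) =
      2 ^ ((q - 1) / 2) * Gamma ((q + 1) / 2) := by
  rw [integral_rpow_mul_exp_neg_mul_rpow two_pos hq (by norm_num), one_div,
    inv_rpow zero_le_two, ← rpow_neg zero_le_two, neg_div, neg_neg,
    show (q + 1) / 2 = (q - 1) / 2 + 1 by ring, rpow_add_one two_ne_zero]
  ring

section GaussianMoment

variable {E : Type*} [NormedAddCommGroup E] [InnerProductSpace ℝ E] [FiniteDimensional ℝ E]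
  [MeasurableSpace E] [BorelSpace E] [Nontrivial E]

lemma pow_mul_sq_rpow_mul_exp_eq {d : ℕ} (hd : 1 ≤ d) (s : ℝ) {y : ℝ} (hy : 0 < y) :
    y ^ (d - 1) * ((y ^ 2) ^ s * exp (-y ^ 2 / 2)) =
      y ^ (2 * s + d - 1) * exp (-(1 / 2) * y ^ (2 : ℝ)) := by
  rw [show 2 * s + d - 1 = ((d - 1 : ℕ) : ℝ) + 2 * s by push_cast [Nat.cast_sub hd]; ring,
    rpow_add hy, rpow_natCast, rpow_mul hy.le, rpow_two, neg_mul, one_div_mul_eq_div,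
    ← neg_div, mul_assoc]

lemma integrable_sq_norm_rpow_mul_exp {s : ℝ} (hs : -(Module.finrank ℝ E : ℝ) / 2 < s) :
    Integrable fun x : E => (‖x‖ ^ 2) ^ s * exp (-‖x‖ ^ 2 / 2) := by
  have hd := Module.finrank_pos (R := ℝ) (M := E)
  refine (integrable_fun_norm_addHaar volume (f := fun y => (y ^ 2) ^ s * exp (-y ^ 2 / 2))).2 ?_
  refine (integrableOn_rpow_mul_exp_neg_mul_rpow (by linarith) two_pos one_half_pos).congr_fun
    (fun y hy => (pow_mul_sq_rpow_mul_exp_eq hd s hy).symm) measurableSet_Ioi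

lemma integral_sq_norm_rpow_mul_exp {s : ℝ} (hs : -(Module.finrank ℝ E : ℝ) / 2 < s) :
    ∫ x : E, (‖x‖ ^ 2) ^ s * exp (-‖x‖ ^ 2 / 2) =
      (2 * π) ^ ((Module.finrank ℝ E : ℝ) / 2) *
        (2 ^ s * (Gamma (s + Module.finrank ℝ E / 2) / Gamma (Module.finrank ℝ E / 2))) := by
  rw [integral_fun_norm_addHaar volume (fun y => (y ^ 2) ^ s * exp (-y ^ 2 / 2))]
  set d := Module.finrank ℝ E
  have hd : 1 ≤ d := Module.finrank_pos
  have hd2 : (0 : ℝ) < d / 2 := by positivity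
  simp only [smul_eq_mul]
  rw [setIntegral_congr_fun measurableSet_Ioi fun y hy => pow_mul_sq_rpow_mul_exp_eq hd s hy,
    integral_Ioi_rpow_mul_exp_neg_half_mul_sq (by linarith), Measure.real,
    InnerProductSpace.volume_ball, ENNReal.ofReal_one, one_pow, one_mul,
    ENNReal.toReal_ofReal (by positivity), Gamma_add_one hd2.ne', nsmul_eq_mul,
    sqrt_eq_rpow, ← rpow_natCast, ← rpow_mul pi_pos.le, mul_rpow zero_le_two pi_pos.le,
    show (2 * s + d - 1 - 1) / 2 = s + d / 2 - 1 by ring,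
    show (2 * s + d - 1 + 1) / 2 = s + d / 2 by ring, rpow_sub_one two_ne_zero, rpow_add two_pos]
  field_simp
  ring

end GaussianMoment

section Coordinates

variable {ι : Type*} [Fintype ι]

lemma sum_sq_rpow_mul_exp_eq_comp_toLp (s : ℝ) :
    (fun z : ι → ℝ => (∑ i, z i ^ 2) ^ s * exp (-(∑ i, z i ^ 2) / 2)) =
      (fun x : EuclideanSpace ℝ ι => (‖x‖ ^ 2) ^ s * exp (-‖x‖ ^ 2 / 2)) ∘ WithLp.toLp 2 := by
  ext z
  simp [EuclideanSpace.real_norm_sq_eq]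

variable [Nonempty ι]

lemma integrable_sum_sq_rpow_mul_exp {s : ℝ} (hs : -(Fintype.card ι : ℝ) / 2 < s) :
    Integrable fun z : ι → ℝ => (∑ i, z i ^ 2) ^ s * exp (-(∑ i, z i ^ 2) / 2) := by
  rw [sum_sq_rpow_mul_exp_eq_comp_toLp]
  exact (PiLp.volume_preserving_toLp ι).integrable_comp_of_integrable
    (integrable_sq_norm_rpow_mul_exp (by rwa [finrank_euclideanSpace]))

lemma integral_sum_sq_rpow_mul_exp {s : ℝ} (hs : -(Fintype.card ι : ℝ) / 2 < s) :
    ∫ z : ι → ℝ, (∑ i, z i ^ 2) ^ s * exp (-(∑ i, z i ^ 2) / 2) =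
      (2 * π) ^ ((Fintype.card ι : ℝ) / 2) *
        (2 ^ s * (Gamma (s + Fintype.card ι / 2) / Gamma (Fintype.card ι / 2))) := by
  rw [sum_sq_rpow_mul_exp_eq_comp_toLp, Function.comp_def]
  refine ((PiLp.volume_preserving_toLp ι).integral_comp
    (MeasurableEquiv.toLp 2 _).measurableEmbedding
    (fun x : EuclideanSpace ℝ ι => (‖x‖ ^ 2) ^ s * exp (-‖x‖ ^ 2 / 2))).trans ?_
  rw [integral_sq_norm_rpow_mul_exp (by rwa [finrank_euclideanSpace]), finrank_euclideanSpace]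

end Coordinates

lemma ae_sum_sq_pos {ι : Type*} [Fintype ι] [Nonempty ι] :
    ∀ᵐ z : ι → ℝ, 0 < ∑ i, z i ^ 2 := by
  filter_upwards [compl_mem_ae_iff.mpr (measure_singleton (0 : ι → ℝ))] with z hz
  obtain ⟨i, hi⟩ := Function.ne_iff.mp hz
  exact Finset.sum_pos' (fun j _ => sq_nonneg _) ⟨i, Finset.mem_univ i, sq_pos_of_ne_zero hi⟩

lemma integral_norm_const_mul_eq_abs_integral {α : Type*} [MeasurableSpace α] {ν : Measure α}
    {g : α → ℝ} (hg : ∀ a, 0 ≤ g a) (c : ℝ) :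
    ∫ a, ‖c * g a‖ ∂ν = |∫ a, c * g a ∂ν| := by
  simp_rw [norm_mul, Real.norm_eq_abs, abs_of_nonneg (hg _)]
  rw [integral_const_mul, integral_const_mul, abs_mul, abs_of_nonneg (integral_nonneg hg)]

lemma gaussDensityIso_zero_one (m : ℕ) (z : Fin m → ℝ) :
    gaussDensityIso m 0 1 z = (2 * π) ^ (-(m : ℝ) / 2) * exp (-(∑ i, z i ^ 2) / 2) := by
  simp [gaussDensityIso]

lemma integrable_sum_sq_rpow_mul_gaussDensityIso {m : ℕ} (hm : 1 ≤ m) {s : ℝ}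
    (hs : -(m : ℝ) / 2 < s) :
    Integrable fun z : Fin m → ℝ => (∑ i, z i ^ 2) ^ s * gaussDensityIso m 0 1 z := by
  have : Nonempty (Fin m) := Fin.pos_iff_nonempty.mp hm
  simp_rw [gaussDensityIso_zero_one, mul_left_comm _ ((2 * π) ^ (-(m : ℝ) / 2))]
  exact (integrable_sum_sq_rpow_mul_exp (by rwa [Fintype.card_fin])).const_mul _

lemma integral_sum_sq_rpow_mul_gaussDensityIso {m : ℕ} (hm : 1 ≤ m) {s : ℝ}
    (hs : -(m : ℝ) / 2 < s) :
    ∫ z : Fin m → ℝ, (∑ i, z i ^ 2) ^ s * gaussDensityIso m 0 1 z =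
      2 ^ s * (Gamma (s + m / 2) / Gamma (m / 2)) := by
  have : Nonempty (Fin m) := Fin.pos_iff_nonempty.mp hm
  simp_rw [gaussDensityIso_zero_one, mul_left_comm _ ((2 * π) ^ (-(m : ℝ) / 2))]
  rw [integral_const_mul, integral_sum_sq_rpow_mul_exp (by rwa [Fintype.card_fin]),
    Fintype.card_fin, ← mul_assoc, ← rpow_add (by positivity), neg_div, neg_add_cancel, rpow_zero,
    one_mul]

lemma rpow_mul_oneF1_mul_eq_tsum {S : ℝ} (hS : 0 < S) (η b c x : ℝ) :
    S ^ η * oneF1 b c (x * S) = ∑' n : ℕ, oneF1Term b c x n * S ^ (η + n) := by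
  rw [oneF1, ← tsum_mul_left]
  refine tsum_congr fun n => ?_
  rw [oneF1Term, rpow_add hS, rpow_natCast, mul_pow]
  ring

lemma oneF1Term_mul_moment_eq_twoF1Term {η c : ℝ} (hηc : 0 < η + c) (b x : ℝ) (n : ℕ) :
    oneF1Term b c (x / 2) n * (2 ^ (η + n) * (Gamma (η + n + c) / Gamma c)) =
      2 ^ η * (Gamma (η + c) / Gamma c) * twoF1Term (η + c) b c x n := by
  rw [add_right_comm, Gamma_add_natCast_eq_mul_poch hηc, rpow_add two_pos, rpow_natCast,
    oneF1Term, twoF1Term, div_pow]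
  field_simp

theorem stmt4_general (m : ℕ) (hm : 1 ≤ m) (μ η : ℝ)
    (hη : -(m : ℝ) / 2 < η)
    (γ : ℝ) (hγ0 : 0 ≤ γ) (hγ1 : γ < 1) :
    ∫ z : Fin m → ℝ,
        (∑ i, z i ^ 2) ^ η * oneF1 (-μ) ((m : ℝ) / 2) (-(γ * ∑ i, z i ^ 2) / 2) *
          gaussDensityIso m 0 1 z =
      (2 : ℝ) ^ η * (Real.Gamma (η + (m : ℝ) / 2) / Real.Gamma ((m : ℝ) / 2)) *
        twoF1 (η + (m : ℝ) / 2) (-μ) ((m : ℝ) / 2) (-γ) := by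
  set K := (2 : ℝ) ^ η * (Gamma (η + (m : ℝ) / 2) / Gamma ((m : ℝ) / 2))
  set t := twoF1Term (η + (m : ℝ) / 2) (-μ) ((m : ℝ) / 2) (-γ)
  set F : ℕ → (Fin m → ℝ) → ℝ := fun n z =>
    oneF1Term (-μ) ((m : ℝ) / 2) (-γ / 2) n * ((∑ i, z i ^ 2) ^ (η + n) * gaussDensityIso m 0 1 z)
  have hηn (n : ℕ) : -(m : ℝ) / 2 < η + n := by linarith [n.cast_nonneg (α := ℝ)]
  have hF_int (n : ℕ) : Integrable (F n) :=
    (integrable_sum_sq_rpow_mul_gaussDensityIso hm (hηn n)).const_mul _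
  have hF_integral (n : ℕ) : ∫ z, F n z = K * t n := by
    rw [integral_const_mul, integral_sum_sq_rpow_mul_gaussDensityIso hm (hηn n)]
    exact oneF1Term_mul_moment_eq_twoF1Term (by linarith) _ _ n
  have hF_norm (n : ℕ) : ∫ z, ‖F n z‖ = |K * t n| := by
    rw [← hF_integral]
    exact integral_norm_const_mul_eq_abs_integral
      (fun z => by rw [gaussDensityIso_zero_one]; positivity) _
  have hF_summable : Summable fun n => ∫ z, ‖F n z‖ := by
    simp_rw [hF_norm, abs_mul]
    exact (summable_abs_twoF1Term _ _ _ (by rwa [abs_neg, abs_of_nonneg hγ0])).mul_left _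
  have hexpand : (fun z : Fin m → ℝ => (∑ i, z i ^ 2) ^ η *
      oneF1 (-μ) ((m : ℝ) / 2) (-(γ * ∑ i, z i ^ 2) / 2) * gaussDensityIso m 0 1 z) =ᵐ[volume]
        fun z => ∑' n, F n z := by
    have : Nonempty (Fin m) := Fin.pos_iff_nonempty.mp hm
    -- only a.e.: at `z = 0` a term with `η + n = 0` would contribute `0 ^ 0 = 1`
    filter_upwards [ae_sum_sq_pos] with z hS
    rw [show -(γ * ∑ i, z i ^ 2) / 2 = -γ / 2 * ∑ i, z i ^ 2 by ring,
      rpow_mul_oneF1_mul_eq_tsum hS, ← tsum_mul_right]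
    exact tsum_congr fun n => mul_assoc _ _ _
  rw [integral_congr_ae hexpand, ← integral_tsum_of_summable_integral_norm hF_int hF_summable,
    tsum_congr hF_integral, tsum_mul_left, twoF1_eq_tsum_twoF1Term]

/-- for `m ≥ 1`, real `μ, η > -m/2`, and `0 ≤ γ < 1`,
`∫_{ℝᵐ} (zᵀz)^η ₁F₁(-μ; m/2; -γ·zᵀz/2) ψ_{0,I}(z) dz
  = 2^η (Γ(η+m/2)/Γ(m/2)) ₂F₁(η+m/2, -μ; m/2; -γ)`. -/
theorem stmt4 (m : ℕ) (hm : 1 ≤ m) (μ η : ℝ)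
    (hμ : -(m : ℝ) / 2 < μ) (hη : -(m : ℝ) / 2 < η)
    (γ : ℝ) (hγ0 : 0 ≤ γ) (hγ1 : γ < 1) :
    ∫ z : Fin m → ℝ,
        (∑ i, z i ^ 2) ^ η * oneF1 (-μ) ((m : ℝ) / 2) (-(γ * ∑ i, z i ^ 2) / 2) *
          gaussDensityIso m 0 1 z =
      (2 : ℝ) ^ η * (Real.Gamma (η + (m : ℝ) / 2) / Real.Gamma ((m : ℝ) / 2)) *
        twoF1 (η + (m : ℝ) / 2) (-μ) ((m : ℝ) / 2) (-γ) :=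
  stmt4_general m hm μ η hη γ hγ0 hγ1
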